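/- arXiv:2312.08831 — 8 statements merged into one kernel-verified Lean document; each statement's English description precedes it below -/
import Mathlib

section
/- Let L ∈ ℝ^{k×n} have full row rank k and A ∈ ℝ^{n×n}. If for every differentiable solution x of x' = A x the function y = L x satisfies y' = (L A L⁺) y, then L A = (L A L⁺) L, i.e., rowspan(LA) ⊆ rowspan(L). -/
/-!
Evaluate the lumped equation `(L x)' = M (L x)` at time `0` along the trajectory
`x t = exp (t A) v`: there `(L x)'(0) = L A v`, so `L A v = M L v` for every initial condition `v`,
i.e. `L A = M L` with `M = L A L⁺`.
-/

open Matrix NormedSpace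

attribute [local instance] Matrix.linftyOpNormedRing Matrix.linftyOpNormedAlgebra

/-- Generalized right inverse `L⁺ = Lᵀ (L Lᵀ)⁻¹`. -/
noncomputable def pinv {k n : ℕ} (L : Matrix (Fin k) (Fin n) ℝ) :
    Matrix (Fin n) (Fin k) ℝ :=
  L.transpose * (L * L.transpose)⁻¹

theorem HasDerivAt.matrix_mulVec {𝕜 m n : Type*} [NontriviallyNormedField 𝕜] [CompleteSpace 𝕜]
    [Fintype m] [Fintype n] (L : Matrix m n 𝕜) {x : 𝕜 → n → 𝕜} {x' : n → 𝕜} {t : 𝕜}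
    (hx : HasDerivAt x x' t) : HasDerivAt (fun s => L *ᵥ x s) (L *ᵥ x') t :=
  (LinearMap.toContinuousLinearMap L.mulVecLin).hasFDerivAt.comp_hasDerivAt t hx

theorem Matrix.hasDerivAt_exp_smul_mulVec {𝕂 n : Type*} [RCLike 𝕂] [Fintype n] [DecidableEq n]
    (A : Matrix n n 𝕂) (v : n → 𝕂) (t : 𝕂) :
    HasDerivAt (fun s => exp (s • A) *ᵥ v) (A *ᵥ (exp (t • A) *ᵥ v)) t := by
  let applyAt : Matrix n n 𝕂 →L[𝕂] n → 𝕂 :=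
    LinearMap.toContinuousLinearMap (LinearMap.applyₗ v ∘ₗ Matrix.toLin'.toLinearMap)
  rw [mulVec_mulVec]
  exact applyAt.hasFDerivAt.comp_hasDerivAt t (hasDerivAt_exp_smul_const' A t)

def Matrix.IsLumping {m n : Type*} [Fintype m] [Fintype n]
    (L : Matrix m n ℝ) (A : Matrix n n ℝ) (M : Matrix m m ℝ) : Prop :=
  ∀ x : ℝ → n → ℝ, (∀ t, HasDerivAt x (A *ᵥ x t) t) →
    ∀ t, HasDerivAt (fun s => L *ᵥ x s) (M *ᵥ (L *ᵥ x t)) t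

theorem Matrix.IsLumping.mul_eq {m n : Type*} [Fintype m] [Fintype n] [DecidableEq n]
    {L : Matrix m n ℝ} {A : Matrix n n ℝ} {M : Matrix m m ℝ} (hL : L.IsLumping A M) :
    L * A = M * L := by
  refine ext_iff_mulVec.2 fun v => ?_
  let x : ℝ → n → ℝ := fun s => exp (s • A) *ᵥ v
  have hx : ∀ t, HasDerivAt x (A *ᵥ x t) t := hasDerivAt_exp_smul_mulVec A v
  have hx0 : x 0 = v := by simp [x]
  have hLx := ((hx 0).matrix_mulVec L).unique (hL x hx 0)
  rwa [hx0, mulVec_mulVec, mulVec_mulVec] at hLx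

theorem lumping_of_trajectory_preservation_general {k n : ℕ}
    (L : Matrix (Fin k) (Fin n) ℝ)
    (A : Matrix (Fin n) (Fin n) ℝ)
    (h : ∀ x : ℝ → Fin n → ℝ,
      (∀ t : ℝ, HasDerivAt x (A.mulVec (x t)) t) →
      ∀ t : ℝ, HasDerivAt (fun s => L.mulVec (x s))
        ((L * A * pinv L).mulVec (L.mulVec (x t))) t) :
    L * A = (L * A * pinv L) * L :=
  Matrix.IsLumping.mul_eq h

theorem lumping_of_trajectory_preservation {k n : ℕ}
    (L : Matrix (Fin k) (Fin n) ℝ) (hrank : L.rank = k)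
    (A : Matrix (Fin n) (Fin n) ℝ)
    (h : ∀ x : ℝ → Fin n → ℝ,
      (∀ t : ℝ, HasDerivAt x (A.mulVec (x t)) t) →
      ∀ t : ℝ, HasDerivAt (fun s => L.mulVec (x s))
        ((L * A * pinv L).mulVec (L.mulVec (x t))) t) :
    L * A = (L * A * pinv L) * L :=
  lumping_of_trajectory_preservation_general L A h
end

section
/- Let L = C D where C ∈ ℝ^{k×n} has full row rank and D ∈ ℝ^{n×n} is invertible diagonal. For matrices A ∈ ℝ^{n×n} and O ∈ ℝ^{l×n}: L is a constrained lumping of A with respect to O (i.e., rowspan(O) ⊆ rowspan(L) and rowspan(LA) ⊆ rowspan(L)) if and only if C is a constrained lumping of D A D⁻¹ with respect to O D⁻¹. -/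
/-- Row space of a matrix: the span of its rows. -/
def rowspan {k n : ℕ} (M : Matrix (Fin k) (Fin n) ℝ) : Submodule ℝ (Fin n → ℝ) :=
  Submodule.span ℝ (Set.range M)

/-! Right multiplication by an invertible matrix `M` maps row spaces to row spaces
injectively, so it preserves and reflects their inclusions. Writing `O = (O M⁻¹) M` and
`(C M) A = (C (M A M⁻¹)) M` turns both conditions for `C M` into those for `C`. -/

lemma rowspan_mul {k n m : ℕ} (X : Matrix (Fin k) (Fin n) ℝ) (M : Matrix (Fin n) (Fin m) ℝ) :
    rowspan (X * M) = (rowspan X).map M.vecMulLinear := by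
  rw [rowspan, rowspan, Submodule.map_span, ← Set.range_comp (g := M.vecMulLinear) (f := X)]
  rfl

lemma rowspan_mul_le_rowspan_mul_iff {k l n : ℕ} (X : Matrix (Fin l) (Fin n) ℝ)
    (Y : Matrix (Fin k) (Fin n) ℝ) {M : Matrix (Fin n) (Fin n) ℝ} (hM : IsUnit M) :
    rowspan (X * M) ≤ rowspan (Y * M) ↔ rowspan X ≤ rowspan Y := by
  rw [rowspan_mul, rowspan_mul]
  exact Submodule.map_le_map_iff_of_injective (Matrix.vecMul_injective_iff_isUnit.mpr hM) _ _

theorem lumping_conditions_mul_iff_conj {k l n : ℕ} (C : Matrix (Fin k) (Fin n) ℝ)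
    {M : Matrix (Fin n) (Fin n) ℝ} (hM : IsUnit M)
    (A : Matrix (Fin n) (Fin n) ℝ) (O : Matrix (Fin l) (Fin n) ℝ) :
    (rowspan O ≤ rowspan (C * M) ∧ rowspan (C * M * A) ≤ rowspan (C * M)) ↔
    (rowspan (O * M⁻¹) ≤ rowspan C ∧ rowspan (C * (M * A * M⁻¹)) ≤ rowspan C) := by
  have hinv : M⁻¹ * M = 1 := Matrix.nonsing_inv_mul M ((Matrix.isUnit_iff_isUnit_det M).mp hM)
  have hO : O = O * M⁻¹ * M := by rw [Matrix.mul_assoc, hinv, Matrix.mul_one]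
  have hCMA : C * M * A = C * (M * A * M⁻¹) * M := by
    simp only [Matrix.mul_assoc, hinv, Matrix.mul_one]
  refine and_congr ?_ ?_
  · rw [← rowspan_mul_le_rowspan_mul_iff (O * M⁻¹) C hM, ← hO]
  · rw [hCMA, rowspan_mul_le_rowspan_mul_iff _ _ hM]

theorem constrained_lumping_conjugation_general {k n l : ℕ}
    (C : Matrix (Fin k) (Fin n) ℝ)
    (d : Fin n → ℝ) (hd : ∀ i, d i ≠ 0)
    (A : Matrix (Fin n) (Fin n) ℝ) (O : Matrix (Fin l) (Fin n) ℝ)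
    (L : Matrix (Fin k) (Fin n) ℝ) (hL : L = C * Matrix.diagonal d) :
    (rowspan O ≤ rowspan L ∧ rowspan (L * A) ≤ rowspan L) ↔
    (rowspan (O * (Matrix.diagonal d)⁻¹) ≤ rowspan C ∧
      rowspan (C * (Matrix.diagonal d * A * (Matrix.diagonal d)⁻¹)) ≤ rowspan C) := by
  subst hL
  exact lumping_conditions_mul_iff_conj C
    (Matrix.isUnit_diagonal.mpr (Pi.isUnit_iff.mpr fun i => (hd i).isUnit)) A O

theorem constrained_lumping_conjugation {k n l : ℕ}
    (C : Matrix (Fin k) (Fin n) ℝ) (hCrank : C.rank = k)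
    (d : Fin n → ℝ) (hd : ∀ i, d i ≠ 0)
    (A : Matrix (Fin n) (Fin n) ℝ) (O : Matrix (Fin l) (Fin n) ℝ)
    (L : Matrix (Fin k) (Fin n) ℝ) (hL : L = C * Matrix.diagonal d) :
    (rowspan O ≤ rowspan L ∧ rowspan (L * A) ≤ rowspan L) ↔
    (rowspan (O * (Matrix.diagonal d)⁻¹) ≤ rowspan C ∧
      rowspan (C * (Matrix.diagonal d * A * (Matrix.diagonal d)⁻¹)) ≤ rowspan C) :=
  constrained_lumping_conjugation_general C d hd A O L hL
end

section
/- Let L ∈ ℝ^{k×n} have rank k ≤ n. Let Z be the set of indices of non-zero columns of L, and define i ∼ j for i, j ∈ Z if the columns L_i and L_j are scalar multiples of each other. If the quotient Z/∼ has exactly k equivalence classes, then there exists a matrix W ∈ ℝ^{k×n} with rowspan(W) = rowspan(L) whose rows have pairwise disjoint supports. -/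
/-- The set of indices of non-zero columns of `L`. -/
def colNonzero {k n : ℕ} (L : Matrix (Fin k) (Fin n) ℝ) : Set (Fin n) :=
  {i | ∃ r, L r i ≠ 0}

/-- Columns `i` and `j` of `L` are proportional (non-zero scalar multiple). -/
def colRel {k n : ℕ} (L : Matrix (Fin k) (Fin n) ℝ) (i j : Fin n) : Prop :=
  ∃ c : ℝ, c ≠ 0 ∧ ∀ r, L r i = c * L r j

/-!
Pick one column of `L` from each of the `k` classes and collect them into a square matrix `C`.
Every column of `L` is zero or proportional to a column of `C`, so the columns of `C` span the
column space of `L`, which is all of `ℝᵏ`; hence `C` is invertible. Then `W = C⁻¹ L` has the same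
row space as `L`, and each of its columns is a multiple of a standard basis vector `C⁻¹ C eₜ = eₜ`,
so no two rows of `W` share a non-zero position.
-/

open Matrix

lemma Matrix.rank_le_rank_of_col_mem_span {K m n p : Type*} [Field K] [Fintype m] [Fintype n]
    [Fintype p] {A : Matrix m n K} {B : Matrix m p K}
    (h : ∀ i, A.col i ∈ Submodule.span K (Set.range B.col)) : A.rank ≤ B.rank := by
  rw [rank_eq_finrank_span_cols, rank_eq_finrank_span_cols]
  exact Submodule.finrank_mono (Submodule.span_le.2 (Set.range_subset_iff.2 h))

lemma Matrix.isUnit_of_card_le_rank {K m : Type*} [Field K] [Fintype m] [DecidableEq m]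
    {A : Matrix m m K} (h : Fintype.card m ≤ A.rank) : IsUnit A := by
  rw [← linearIndependent_cols_iff_isUnit, linearIndependent_iff_card_eq_finrank_span,
    Set.finrank, ← rank_eq_finrank_span_cols]
  exact le_antisymm h A.rank_le_card_width

lemma rowspan_mul_le {k m n : ℕ} (A : Matrix (Fin k) (Fin m) ℝ) (B : Matrix (Fin m) (Fin n) ℝ) :
    rowspan (A * B) ≤ rowspan B := by
  rw [rowspan, Submodule.span_le]
  rintro _ ⟨r, rfl⟩
  change _ ∈ Submodule.span ℝ (Set.range B.row)
  rw [← range_vecMulLinear]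
  exact ⟨A r, rfl⟩

lemma rowspan_mul_of_isUnit {k n : ℕ} {A : Matrix (Fin k) (Fin k) ℝ} (hA : IsUnit A)
    (B : Matrix (Fin k) (Fin n) ℝ) : rowspan (A * B) = rowspan B := by
  refine le_antisymm (rowspan_mul_le A B) ?_
  have hB : A⁻¹ * (A * B) = B := nonsing_inv_mul_cancel_left A B ((isUnit_iff_isUnit_det A).1 hA)
  simpa only [hB] using rowspan_mul_le A⁻¹ (A * B)

section ProportionalColumns

variable {k n : ℕ} {L : Matrix (Fin k) (Fin n) ℝ} {C : Matrix (Fin k) (Fin k) ℝ}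

lemma apply_eq_zero_of_notMem_colNonzero {i : Fin n} (hi : i ∉ colNonzero L) (r : Fin k) :
    L r i = 0 :=
  not_not.1 fun hr => hi ⟨r, hr⟩

lemma col_mem_span_of_proportional (hLC : ∀ i ∈ colNonzero L, ∃ t, ∃ c : ℝ, ∀ r, L r i = c * C r t)
    (i : Fin n) : L.col i ∈ Submodule.span ℝ (Set.range C.col) := by
  by_cases hi : i ∈ colNonzero L
  · obtain ⟨t, c, hc⟩ := hLC i hi
    rw [show L.col i = c • C.col t from funext hc]
    exact Submodule.smul_mem _ c (Submodule.subset_span ⟨t, rfl⟩)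
  · rw [show L.col i = 0 from funext (apply_eq_zero_of_notMem_colNonzero hi)]
    exact Submodule.zero_mem _

lemma inv_mul_apply_of_proportional (hC : IsUnit C) {i : Fin n} {t : Fin k} {c : ℝ}
    (h : ∀ r, L r i = c * C r t) (s : Fin k) : (C⁻¹ * L) s i = (Pi.single t c : Fin k → ℝ) s := by
  have hCC : C⁻¹ * C = 1 := nonsing_inv_mul C ((isUnit_iff_isUnit_det C).1 hC)
  calc (C⁻¹ * L) s i = c * (C⁻¹ * C) s t := by
        simp only [mul_apply, h, Finset.mul_sum, mul_left_comm]
    _ = (Pi.single t c : Fin k → ℝ) s := by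
        rw [hCC, one_apply, Pi.single_apply]
        split_ifs <;> simp

lemma inv_mul_disjoint_rows (hC : IsUnit C)
    (hLC : ∀ i ∈ colNonzero L, ∃ t, ∃ c : ℝ, ∀ r, L r i = c * C r t) (r r' : Fin k) (hr : r ≠ r')
    (i : Fin n) (hri : (C⁻¹ * L) r i ≠ 0) : (C⁻¹ * L) r' i = 0 := by
  by_cases hi : i ∈ colNonzero L
  · obtain ⟨t, c, hc⟩ := hLC i hi
    rw [inv_mul_apply_of_proportional hC hc] at hri ⊢
    have hrt : r = t := by_contra fun hrt => hri (by simp [hrt])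
    subst hrt
    simp [hr.symm]
  · simp [mul_apply, apply_eq_zero_of_notMem_colNonzero hi]

end ProportionalColumns

lemma exists_proportional_of_classes {k n : ℕ} {ι : Type*} {L : Matrix (Fin k) (Fin n) ℝ}
    {f : colNonzero L → ι} (hf : Function.Surjective f)
    (hrel : ∀ i j, f i = f j → colRel L i.1 j.1) :
    ∃ C : Matrix (Fin k) ι ℝ, ∀ i ∈ colNonzero L, ∃ t, ∃ c : ℝ, ∀ r, L r i = c * C r t := by
  refine ⟨L.submatrix id fun t => (Function.surjInv hf t).1, fun i hi => ⟨f ⟨i, hi⟩, ?_⟩⟩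
  obtain ⟨c, -, hc⟩ := hrel ⟨i, hi⟩ _ (Function.surjInv_eq hf _).symm
  exact ⟨c, hc⟩

theorem disjoint_support_basis_of_k_classes_general {k n : ℕ}
    (L : Matrix (Fin k) (Fin n) ℝ) (hrank : L.rank = k)
    (hclasses : ∃ f : colNonzero L → Fin k, Function.Surjective f ∧
      ∀ i j : colNonzero L, f i = f j ↔ colRel L i.1 j.1) :
    ∃ W : Matrix (Fin k) (Fin n) ℝ,
      rowspan W = rowspan L ∧
      ∀ r r' : Fin k, r ≠ r' → ∀ i, W r i ≠ 0 → W r' i = 0 := by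
  obtain ⟨f, hf, hfrel⟩ := hclasses
  obtain ⟨C, hLC⟩ := exists_proportional_of_classes hf fun i j => (hfrel i j).1
  have hC : IsUnit C := C.isUnit_of_card_le_rank <| by
    simpa only [Fintype.card_fin, hrank] using
      rank_le_rank_of_col_mem_span (col_mem_span_of_proportional hLC)
  exact ⟨C⁻¹ * L, rowspan_mul_of_isUnit (isUnit_nonsing_inv_iff.2 hC) L,
    inv_mul_disjoint_rows hC hLC⟩

theorem disjoint_support_basis_of_k_classes {k n : ℕ} (hkn : k ≤ n)
    (L : Matrix (Fin k) (Fin n) ℝ) (hrank : L.rank = k)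
    (hclasses : ∃ f : colNonzero L → Fin k, Function.Surjective f ∧
      ∀ i j : colNonzero L, f i = f j ↔ colRel L i.1 j.1) :
    ∃ W : Matrix (Fin k) (Fin n) ℝ,
      rowspan W = rowspan L ∧
      ∀ r r' : Fin k, r ≠ r' → ∀ i, W r i ≠ 0 → W r' i = 0 :=
  disjoint_support_basis_of_k_classes_general L hrank hclasses
end

section
/- Let L ∈ ℝ^{k×n} have rank k ≤ n, let Z be the set of indices of non-zero columns of L, and define i ∼ j for i,j ∈ Z if columns L_i and L_j are scalar multiples of each other. If there exists W ∈ ℝ^{k×n} with rowspan(W) = rowspan(L) whose rows have pairwise disjoint supports, then Z/∼ has exactly k equivalence classes. -/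
/-!
Write `L = S * W`; since `L` has rank `k`, the square matrix `S` is invertible and `W` has
independent, hence non-zero, rows. As the rows of `W` have disjoint supports, the index `i` of a
non-zero column of `L` lies in the support of exactly one row `r` of `W`, and then column `i` of
`L` is `W r i` times column `r` of `S`. Sending `i` to `r` identifies the classes of `∼` with the
columns of `S`: two columns of `L` are proportional exactly when they come from the same column
of `S`, because distinct columns of an invertible matrix are linearly independent.
-/

open Matrix

theorem LinearIndependent.pair_of_ne {R M ι : Type*} [Semiring R] [AddCommMonoid M]
    [Module R M] {v : ι → M} (hv : LinearIndependent R v) {i j : ι} (hij : i ≠ j) :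
    LinearIndependent R ![v i, v j] := by
  have hinj : Function.Injective ![i, j] := by
    rw [vecCons, Fin.cons_injective_iff]
    exact ⟨by simpa using hij, Function.injective_of_subsingleton _⟩
  convert hv.comp _ hinj using 1
  ext a; fin_cases a <;> rfl

namespace Matrix

variable {R l m n : Type*}

theorem linearIndependent_row_of_rank_eq_card [Field R] [Fintype m] [Fintype n]
    {M : Matrix m n R} (h : M.rank = Fintype.card m) : LinearIndependent R M.row := by
  rw [linearIndependent_iff_card_eq_finrank_span, Set.finrank, ← rank_eq_finrank_span_row, h]

theorem linearIndependent_col_of_rank_eq_card [Field R] [Fintype m] [Fintype n]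
    {M : Matrix m n R} (h : M.rank = Fintype.card n) : LinearIndependent R M.col := by
  rw [← row_transpose]
  exact linearIndependent_row_of_rank_eq_card (by rwa [rank_transpose])

theorem exists_mul_eq_of_span_row_le [CommSemiring R] [Fintype m] {L : Matrix l n R}
    {W : Matrix m n R}
    (h : Submodule.span R (Set.range L.row) ≤ Submodule.span R (Set.range W.row)) :
    ∃ S : Matrix l m R, L = S * W := by
  have hrow : ∀ r, ∃ c, c ᵥ* W = L r := fun r =>
    LinearMap.mem_range.mp ((range_vecMulLinear W).ge (h (Submodule.subset_span ⟨r, rfl⟩)))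
  choose S hS using hrow
  exact ⟨of S, funext fun r => (hS r).symm⟩

def HasDisjointRowSupports [Zero R] (W : Matrix m n R) : Prop :=
  ∀ r r', r ≠ r' → ∀ i, W r i ≠ 0 → W r' i = 0

namespace HasDisjointRowSupports

theorem eq_of_ne_zero [Zero R] {W : Matrix m n R} (hW : W.HasDisjointRowSupports) {r r' : m}
    {i : n} (hr : W r i ≠ 0) (hr' : W r' i ≠ 0) : r = r' :=
  by_contra fun h => hr' (hW r r' h i hr)

theorem mul_apply [NonUnitalNonAssocSemiring R] [Fintype m] {W : Matrix m n R}
    (hW : W.HasDisjointRowSupports) (S : Matrix l m R) {r : m} {i : n} (hri : W r i ≠ 0)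
    (s : l) : (S * W) s i = S s r * W r i := by
  rw [Matrix.mul_apply]
  refine Finset.sum_eq_single r (fun t _ htr => ?_) (fun h => (h (Finset.mem_univ r)).elim)
  rw [hW r t (Ne.symm htr) i hri, mul_zero]

end HasDisjointRowSupports

end Matrix

section ColumnClasses

variable {k n : ℕ} {ι : Type*} [Fintype ι]
  {S : Matrix (Fin k) ι ℝ} {W : Matrix ι (Fin n) ℝ}

theorem mem_colNonzero_mul_iff (hS : ∀ r, S.col r ≠ 0) (hW : W.HasDisjointRowSupports)
    {i : Fin n} : i ∈ colNonzero (S * W) ↔ ∃ r, W r i ≠ 0 := by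
  constructor
  · rintro ⟨s, hs⟩
    by_contra! h
    exact hs (by simp [Matrix.mul_apply, h])
  · rintro ⟨r, hri⟩
    obtain ⟨s, hs⟩ := Function.ne_iff.mp (hS r)
    exact ⟨s, by rw [hW.mul_apply S hri]; exact mul_ne_zero hs hri⟩

theorem colRel_mul_iff (hS : LinearIndependent ℝ S.col) (hW : W.HasDisjointRowSupports)
    {r r' : ι} {i j : Fin n} (hi : W r i ≠ 0) (hj : W r' j ≠ 0) :
    colRel (S * W) i j ↔ r = r' := by
  constructor
  · rintro ⟨c, -, hc⟩
    by_contra hne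
    have hcol : W r i • S.col r = (c * W r' j) • S.col r' := funext fun s => by
      have := hc s
      rw [hW.mul_apply S hi, hW.mul_apply S hj] at this
      simp only [Pi.smul_apply, col_apply, smul_eq_mul]
      linear_combination this
    exact hi ((hS.pair_of_ne hne).eq_zero_of_pair' hcol).1
  · rintro rfl
    refine ⟨W r i / W r j, div_ne_zero hi hj, fun s => ?_⟩
    rw [hW.mul_apply S hi, hW.mul_apply S hj]
    field_simp

theorem exists_surjective_colNonzero_classes_of_mul (hS : LinearIndependent ℝ S.col)
    (hW : W.HasDisjointRowSupports) (hWrow : ∀ r, W r ≠ 0) :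
    ∃ f : colNonzero (S * W) → ι, Function.Surjective f ∧
      ∀ i j : colNonzero (S * W), f i = f j ↔ colRel (S * W) i.1 j.1 := by
  have hmem := fun i => mem_colNonzero_mul_iff (i := i) hS.ne_zero hW
  choose f hf using fun i : colNonzero (S * W) => (hmem i).1 i.2
  refine ⟨f, fun r => ?_, fun i j => (colRel_mul_iff hS hW (hf i) (hf j)).symm⟩
  obtain ⟨i, hi⟩ := Function.ne_iff.mp (hWrow r)
  exact ⟨⟨i, (hmem i).2 ⟨r, hi⟩⟩, hW.eq_of_ne_zero (hf _) hi⟩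

end ColumnClasses

theorem rank_eq_finrank_rowspan {k n : ℕ} (M : Matrix (Fin k) (Fin n) ℝ) :
    M.rank = Module.finrank ℝ (rowspan M) :=
  M.rank_eq_finrank_span_row

theorem k_classes_of_disjoint_support_basis_general {k n : ℕ}
    (L : Matrix (Fin k) (Fin n) ℝ) (hrank : L.rank = k)
    (hW : ∃ W : Matrix (Fin k) (Fin n) ℝ,
      rowspan W = rowspan L ∧
      ∀ r r' : Fin k, r ≠ r' → ∀ i, W r i ≠ 0 → W r' i = 0) :
    ∃ f : colNonzero L → Fin k, Function.Surjective f ∧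
      ∀ i j : colNonzero L, f i = f j ↔ colRel L i.1 j.1 := by
  obtain ⟨W, hspan, hdis⟩ := hW
  have hWrank : W.rank = k := by
    rw [rank_eq_finrank_rowspan, hspan, ← rank_eq_finrank_rowspan, hrank]
  obtain ⟨S, rfl⟩ := exists_mul_eq_of_span_row_le hspan.ge
  have hSrank : S.rank = k :=
    le_antisymm (rank_le_width S) (hrank.ge.trans (rank_mul_le_left S W))
  exact exists_surjective_colNonzero_classes_of_mul
    (linearIndependent_col_of_rank_eq_card (by simpa using hSrank)) hdis
    (linearIndependent_row_of_rank_eq_card (by simpa using hWrank)).ne_zero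

theorem k_classes_of_disjoint_support_basis {k n : ℕ} (hkn : k ≤ n)
    (L : Matrix (Fin k) (Fin n) ℝ) (hrank : L.rank = k)
    (hW : ∃ W : Matrix (Fin k) (Fin n) ℝ,
      rowspan W = rowspan L ∧
      ∀ r r' : Fin k, r ≠ r' → ∀ i, W r i ≠ 0 → W r' i = 0) :
    ∃ f : colNonzero L → Fin k, Function.Surjective f ∧
      ∀ i j : colNonzero L, f i = f j ↔ colRel L i.1 j.1 :=
  k_classes_of_disjoint_support_basis_general L hrank hW
end

section
/- Let L ∈ ℝ^{k×n} have rank k and be in reduced row echelon form, and suppose the number of proportionality classes of its non-zero columns equals k. Then the rows of L have pairwise disjoint supports. -/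
theorem rref_k_classes_disjoint_supports {k n : ℕ}
    (L : Matrix (Fin k) (Fin n) ℝ) (hrank : L.rank = k)
    (hrref : ∀ r : Fin k, ∃ i : Fin n,
      (fun r' : Fin k => L r' i) = fun r' : Fin k => if r' = r then (1 : ℝ) else 0)
    (hclasses : ∃ f : colNonzero L → Fin k, Function.Surjective f ∧
      ∀ i j : colNonzero L, f i = f j ↔ colRel L i.1 j.1) :
    ∀ r r' : Fin k, r ≠ r' → ∀ i, L r i ≠ 0 → L r' i = 0 := by
  classical
  obtain ⟨f, hfsurj, hfrel⟩ := hclasses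
  -- pivot columns
  choose p hp using hrref
  have hpval : ∀ r s : Fin k, L s (p r) = if s = r then (1 : ℝ) else 0 := by
    intro r s
    exact congrFun (hp r) s
  have hpmem : ∀ r : Fin k, p r ∈ colNonzero L := by
    intro r
    refine ⟨r, ?_⟩
    rw [hpval r r]
    simp
  set g : Fin k → Fin k := fun r => f ⟨p r, hpmem r⟩ with hg
  have hginj : Function.Injective g := by
    intro r r' h
    by_contra hne
    obtain ⟨c, hc, hcol⟩ := (hfrel _ _).mp h
    have := hcol r
    rw [hpval r r, hpval r' r] at this
    simp [hne] at this
  have hgsurj : Function.Surjective g := Finite.surjective_of_injective hginj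
  intro r r' hne i hi
  have hmem : i ∈ colNonzero L := ⟨r, hi⟩
  obtain ⟨s, hs⟩ := hgsurj (f ⟨i, hmem⟩)
  obtain ⟨c, hc, hcol⟩ := (hfrel _ _).mp hs.symm
  have hrs : r = s := by
    by_contra hrs
    have := hcol r
    rw [hpval s r] at this
    simp [hrs] at this
    exact hi this
  have := hcol r'
  rw [hpval s r'] at this
  rw [this]
  simp [← hrs, Ne.symm hne]
end

section
/- Let L ∈ ℝ^{k×n} have rank k, be in reduced row echelon form, and have rows with pairwise disjoint supports. Suppose there exists W ∈ ℝ_{≥0}^{k×n} with all entries non-negative, rank k, rows with pairwise disjoint supports, and rowspan(W) = rowspan(L). Then all entries of L are non-negative, i.e., L is itself a proper matrix. -/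
/-!
Write a row of `L` as a combination `∑ c s • W s` of the rows of `W`. Since the rows of `W` have
disjoint supports, the coefficient `c s` is read off at any column `j` where `W s` is nonzero:
`L r j = c s * W s j`. A nonzero row `W s` lies in the row space of `L`, so it is nonzero at some
pivot column of `L`, where all entries of `L` are `0` or `1`. Hence every coefficient of a nonzero
row of `W` is nonnegative, and so is every entry of `L`.
-/

section
variable {ι κ R : Type*} [Fintype ι]

theorem exists_apply_eq_sum_of_mem_span_range [Semiring R] {W : ι → κ → R} {v : κ → R}
    (hv : v ∈ Submodule.span R (Set.range W)) : ∃ c : ι → R, ∀ j, v j = ∑ s, c s * W s j := by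
  obtain ⟨c, rfl⟩ := (Submodule.mem_span_range_iff_exists_fun R).mp hv
  exact ⟨c, fun j => by simp [Finset.sum_apply]⟩

theorem sum_mul_apply_eq_of_disjoint_support [Semiring R] {W : ι → κ → R}
    (hdisj : ∀ s s', s ≠ s' → ∀ j, W s j ≠ 0 → W s' j = 0) (c : ι → R) {s : ι} {j : κ}
    (hsj : W s j ≠ 0) : ∑ t, c t * W t j = c s * W s j :=
  Finset.sum_eq_single s (fun t _ hts => by rw [hdisj s t hts.symm j hsj, mul_zero]) (by simp)

theorem coeff_nonneg_of_disjoint_support [Semiring R] [LinearOrder R] [IsStrictOrderedRing R]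
    {W : ι → κ → R} (hnonneg : ∀ s j, 0 ≤ W s j)
    (hdisj : ∀ s s', s ≠ s' → ∀ j, W s j ≠ 0 → W s' j = 0) {v : κ → R} {c : ι → R}
    (hv : ∀ j, v j = ∑ t, c t * W t j) {s : ι} {j : κ} (hsj : W s j ≠ 0) (hvj : 0 ≤ v j) :
    0 ≤ c s := by
  rw [hv j, sum_mul_apply_eq_of_disjoint_support hdisj c hsj] at hvj
  exact nonneg_of_mul_nonneg_left hvj ((hnonneg s j).lt_of_ne' hsj)

theorem exists_apply_pivot_ne_zero [Semiring R] [DecidableEq ι] {L : ι → κ → R}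
    {p : ι → κ} (hpiv : ∀ t r, L r (p t) = if r = t then 1 else 0) {w : κ → R}
    (hw : w ∈ Submodule.span R (Set.range L)) (hw0 : w ≠ 0) : ∃ t, w (p t) ≠ 0 := by
  obtain ⟨d, hd⟩ := exists_apply_eq_sum_of_mem_span_range hw
  have hd_pivot : ∀ t, w (p t) = d t := fun t => by
    rw [hd, Finset.sum_eq_single t (fun r _ hrt => by rw [hpiv, if_neg hrt, mul_zero]) (by simp),
      hpiv, if_pos rfl, mul_one]
  by_contra! hzero
  have hd0 : ∀ t, d t = 0 := fun t => (hd_pivot t).symm.trans (hzero t)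
  exact hw0 (funext fun j => by simp [hd, hd0])

end

theorem rref_with_nonneg_witness_is_nonneg_general {k n : ℕ}
    (L : Matrix (Fin k) (Fin n) ℝ)
    (hrref : ∀ r : Fin k, ∃ i : Fin n,
      (fun r' : Fin k => L r' i) = fun r' : Fin k => if r' = r then (1 : ℝ) else 0)
    (hW : ∃ W : Matrix (Fin k) (Fin n) ℝ,
      (∀ r i, 0 ≤ W r i) ∧ W.rank = k ∧
      (∀ r r' : Fin k, r ≠ r' → ∀ i, W r i ≠ 0 → W r' i = 0) ∧
      rowspan W = rowspan L) :
    ∀ r i, 0 ≤ L r i := by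
  obtain ⟨W, hWnonneg, -, hWdisj, hspan⟩ := hW
  choose p hp using hrref
  have hpiv : ∀ t r, L r (p t) = if r = t then 1 else 0 := fun t => congrFun (hp t)
  intro r i
  have hLr : L r ∈ rowspan W := hspan ▸ Submodule.subset_span ⟨r, rfl⟩
  obtain ⟨c, hc⟩ := exists_apply_eq_sum_of_mem_span_range hLr
  rw [hc i]
  refine Finset.sum_nonneg fun s _ => ?_
  rcases (hWnonneg s i).eq_or_lt with hsi | hsi
  · simp [← hsi]
  have hWs : W s ∈ rowspan L := hspan ▸ Submodule.subset_span ⟨s, rfl⟩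
  obtain ⟨t, ht⟩ := exists_apply_pivot_ne_zero hpiv hWs fun h => hsi.ne' (by simp [h])
  have hLpivot : 0 ≤ L r (p t) := by rw [hpiv]; split_ifs <;> norm_num
  exact mul_nonneg (coeff_nonneg_of_disjoint_support hWnonneg hWdisj hc ht hLpivot) hsi.le

theorem rref_with_nonneg_witness_is_nonneg {k n : ℕ}
    (L : Matrix (Fin k) (Fin n) ℝ) (hrank : L.rank = k)
    (hrref : ∀ r : Fin k, ∃ i : Fin n,
      (fun r' : Fin k => L r' i) = fun r' : Fin k => if r' = r then (1 : ℝ) else 0)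
    (hLdisj : ∀ r r' : Fin k, r ≠ r' → ∀ i, L r i ≠ 0 → L r' i = 0)
    (hW : ∃ W : Matrix (Fin k) (Fin n) ℝ,
      (∀ r i, 0 ≤ W r i) ∧ W.rank = k ∧
      (∀ r r' : Fin k, r ≠ r' → ∀ i, W r i ≠ 0 → W r' i = 0) ∧
      rowspan W = rowspan L) :
    ∀ r i, 0 ≤ L r i :=
  rref_with_nonneg_witness_is_nonneg_general L hrref hW
end

section
/- Let C ∈ {0,1}^{k×n} be a proper matrix (full row rank, rows with pairwise disjoint supports), inducing the partition blocks H_r = supp(row r of C) for 1 ≤ r ≤ k. Let A ∈ ℝ^{n×n}. Then C is a lumping of A (i.e., rowspan(CA) ⊆ rowspan(C)) if and only if for every pair of block indices r, r' and every pair of column indices i, i' ∈ H_{r'}, one has Σ_{j ∈ H_r} A_{j,i} = Σ_{j ∈ H_r} A_{j,i'}, and moreover Σ_{j ∈ H_r} A_{j,i} = 0 for every i not belonging to any block. -/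
theorem rowspan_le_iff {k n : ℕ} (M : Matrix (Fin k) (Fin n) ℝ) (S : Submodule ℝ (Fin n → ℝ)) :
    rowspan M ≤ S ↔ ∀ r, M r ∈ S :=
  Submodule.span_le.trans Set.range_subset_iff

section BlockRows

variable {R κ ι : Type*} [Semiring R] [Fintype κ] {C : κ → ι → R}

theorem sum_smul_apply_of_eq_one
    (hdisj : ∀ r r' : κ, r ≠ r' → ∀ i, C r i ≠ 0 → C r' i = 0)
    (c : κ → R) {r : κ} {i : ι} (hri : C r i = 1) :
    (∑ s, c s • C s) i = c r := by
  -- over the zero ring `C r i = 1` does not give `C r i ≠ 0`, which `hdisj` needs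
  rcases subsingleton_or_nontrivial R with _ | _
  · exact Subsingleton.elim _ _
  rw [Finset.sum_apply, Finset.sum_eq_single r]
  · simp [hri]
  · intro s _ hs
    simp [hdisj r s (Ne.symm hs) i (by simp [hri])]
  · simp

theorem sum_smul_apply_of_forall_eq_zero (c : κ → R) {i : ι} (hi : ∀ r, C r i = 0) :
    (∑ s, c s • C s) i = 0 := by
  simp [Finset.sum_apply, hi]

theorem mem_span_range_iff_of_zero_one_disjoint
    (h01 : ∀ r i, C r i = 0 ∨ C r i = 1)
    (hdisj : ∀ r r' : κ, r ≠ r' → ∀ i, C r i ≠ 0 → C r' i = 0) (v : ι → R) :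
    v ∈ Submodule.span R (Set.range C) ↔
      (∀ r i i', C r i = 1 → C r i' = 1 → v i = v i') ∧ ∀ i, (∀ r, C r i = 0) → v i = 0 := by
  classical
  rw [Submodule.mem_span_range_iff_exists_fun]
  constructor
  · rintro ⟨c, rfl⟩
    refine ⟨fun r i i' hi hi' => ?_, fun i hi => sum_smul_apply_of_forall_eq_zero c hi⟩
    rw [sum_smul_apply_of_eq_one hdisj c hi, sum_smul_apply_of_eq_one hdisj c hi']
  · rintro ⟨hconst, hzero⟩
    -- the coefficient of a row is the common value of `v` on its support
    refine ⟨fun r => if h : ∃ i, C r i = 1 then v h.choose else 0, funext fun i => ?_⟩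
    by_cases hi : ∃ r, C r i = 1
    · obtain ⟨r, hri⟩ := hi
      have hr : ∃ i, C r i = 1 := ⟨i, hri⟩
      rw [sum_smul_apply_of_eq_one hdisj _ hri, dif_pos hr]
      exact hconst r _ i hr.choose_spec hri
    · have hi : ∀ r, C r i = 0 := fun r => (h01 r i).resolve_right fun h => hi ⟨r, h⟩
      rw [sum_smul_apply_of_forall_eq_zero _ hi, hzero i hi]

end BlockRows

theorem zero_one_lumping_characterization_general {k n : ℕ}
    (C : Matrix (Fin k) (Fin n) ℝ)
    (hC01 : ∀ r i, C r i = 0 ∨ C r i = 1)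
    (hCdisj : ∀ r r' : Fin k, r ≠ r' → ∀ i, C r i ≠ 0 → C r' i = 0)
    (A : Matrix (Fin n) (Fin n) ℝ) :
    rowspan (C * A) ≤ rowspan C ↔
      ((∀ r r' : Fin k, ∀ i i' : Fin n, C r' i = 1 → C r' i' = 1 →
          ∑ j, C r j * A j i = ∑ j, C r j * A j i') ∧
        ∀ i : Fin n, (∀ r', C r' i = 0) →
          ∀ r : Fin k, ∑ j, C r j * A j i = 0) := by
  rw [rowspan_le_iff]
  simp only [rowspan, mem_span_range_iff_of_zero_one_disjoint hC01 hCdisj, Matrix.mul_apply,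
    forall_and]
  exact and_congr_right' ⟨fun h i hi r => h r i hi, fun h r i hi => h i hi r⟩

theorem zero_one_lumping_characterization {k n : ℕ}
    (C : Matrix (Fin k) (Fin n) ℝ)
    (hC01 : ∀ r i, C r i = 0 ∨ C r i = 1)
    (hCrank : C.rank = k)
    (hCdisj : ∀ r r' : Fin k, r ≠ r' → ∀ i, C r i ≠ 0 → C r' i = 0)
    (A : Matrix (Fin n) (Fin n) ℝ) :
    rowspan (C * A) ≤ rowspan C ↔
      ((∀ r r' : Fin k, ∀ i i' : Fin n, C r' i = 1 → C r' i' = 1 →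
          ∑ j, C r j * A j i = ∑ j, C r j * A j i') ∧
        ∀ i : Fin n, (∀ r', C r' i = 0) →
          ∀ r : Fin k, ∑ j, C r j * A j i = 0) :=
  zero_one_lumping_characterization_general C hC01 hCdisj A
end

section
/- Let D be an invertible diagonal n×n matrix with positive entries, L a matrix of full row rank k ≤ n with L = C D for C of full row rank, and let A ∈ ℝ^{n×n}, u : ℝ → ℝ^m, B ∈ ℝ^{n×m}. If x solves x' = A x + B u then, setting M = D A D⁻¹, the function z = D x solves z' = M z + D B u, and L x = C z. Consequently, if C is a lumping of M (i.e., C M = (C M C⁺) C) then y = L x solves y' = (L A L⁺) y + (L B) u. -/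
namespace Matrix

theorem isUnit_det_of_rank_eq_card {ι K : Type*} [Fintype ι] [DecidableEq ι] [Field K]
    {A : Matrix ι ι K} (h : A.rank = Fintype.card ι) : IsUnit A.det := by
  rw [← isUnit_iff_isUnit_det, ← mulVec_surjective_iff_isUnit]
  have hrange : LinearMap.range A.mulVecLin = ⊤ :=
    Submodule.eq_top_of_finrank_eq (h.trans (Module.finrank_fintype_fun_eq_card K).symm)
  exact LinearMap.range_eq_top.mp hrange

theorem mul_pinv_of_rank_eq {k n : ℕ} {L : Matrix (Fin k) (Fin n) ℝ} (h : L.rank = k) :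
    L * pinv L = 1 := by
  have hdet : IsUnit (L * Lᵀ).det := isUnit_det_of_rank_eq_card (by simpa using h)
  rw [pinv, ← Matrix.mul_assoc, mul_nonsing_inv _ hdet]

theorem mul_eq_mul_pinv_mul_of_mul_eq {k n : ℕ} {L : Matrix (Fin k) (Fin n) ℝ}
    (h : L.rank = k) {A : Matrix (Fin n) (Fin n) ℝ} {R : Matrix (Fin k) (Fin k) ℝ}
    (hLA : L * A = R * L) : L * A = L * A * pinv L * L := by
  rw [hLA, Matrix.mul_assoc R, mul_pinv_of_rank_eq h, Matrix.mul_one]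

theorem mul_mul_eq_of_mul_conj_eq {ι κ K : Type*} [Fintype ι] [DecidableEq ι] [Fintype κ]
    [CommRing K] {C : Matrix κ ι K} {D A : Matrix ι ι K} {R : Matrix κ κ K} (hD : IsUnit D.det)
    (hlump : C * (D * A * D⁻¹) = R * C) : C * D * A = R * (C * D) := by
  rw [Matrix.mul_assoc C D A, ← nonsing_inv_mul_cancel_right D (D * A) hD, ← Matrix.mul_assoc,
    hlump, Matrix.mul_assoc]

end Matrix

open Matrix

theorem HasDerivAt.mulVec_of_mul_eq_mul {𝕜 ι κ μ : Type*} [NontriviallyNormedField 𝕜]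
    [Fintype ι] [Fintype κ] [Fintype μ] {A : Matrix ι ι 𝕜} {B : Matrix ι μ 𝕜}
    {P : Matrix κ ι 𝕜} {R : Matrix κ κ 𝕜} {x : 𝕜 → ι → 𝕜} {u : μ → 𝕜} {t : 𝕜}
    (hx : HasDerivAt x (A *ᵥ x t + B *ᵥ u) t) (hPA : P * A = R * P) :
    HasDerivAt (fun s => P *ᵥ x s) (R *ᵥ (P *ᵥ x t) + (P * B) *ᵥ u) t := by
  have hPx : HasDerivAt (fun s => P *ᵥ x s) (P *ᵥ (A *ᵥ x t + B *ᵥ u)) t :=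
    hasDerivAt_pi.mpr fun i => HasDerivAt.fun_sum fun j _ => (hasDerivAt_pi.mp hx j).const_mul _
  rwa [mulVec_add, mulVec_mulVec, mulVec_mulVec, hPA, ← mulVec_mulVec] at hPx

theorem lumping_via_diagonal_conjugation_general {k n m : ℕ}
    (d : Fin n → ℝ) (hd : ∀ i, 0 < d i)
    (C : Matrix (Fin k) (Fin n) ℝ)
    (L : Matrix (Fin k) (Fin n) ℝ) (hL : L = C * Matrix.diagonal d)
    (hLrank : L.rank = k)
    (A : Matrix (Fin n) (Fin n) ℝ) (B : Matrix (Fin n) (Fin m) ℝ)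
    (u : ℝ → Fin m → ℝ) (x : ℝ → Fin n → ℝ)
    (hx : ∀ t : ℝ, HasDerivAt x (A.mulVec (x t) + B.mulVec (u t)) t) :
    (∀ t : ℝ, HasDerivAt (fun s => (Matrix.diagonal d).mulVec (x s))
        ((Matrix.diagonal d * A * (Matrix.diagonal d)⁻¹).mulVec
            ((Matrix.diagonal d).mulVec (x t)) +
          (Matrix.diagonal d * B).mulVec (u t)) t) ∧
    (∀ t : ℝ, L.mulVec (x t) = C.mulVec ((Matrix.diagonal d).mulVec (x t))) ∧
    ((C * (Matrix.diagonal d * A * (Matrix.diagonal d)⁻¹) =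
        (C * (Matrix.diagonal d * A * (Matrix.diagonal d)⁻¹) * pinv C) * C) →
      ∀ t : ℝ, HasDerivAt (fun s => L.mulVec (x s))
        ((L * A * pinv L).mulVec (L.mulVec (x t)) + (L * B).mulVec (u t)) t) := by
  have hD : IsUnit (diagonal d).det :=
    (isUnit_iff_isUnit_det _).mp <| isUnit_diagonal.mpr <| Pi.isUnit_iff.mpr fun i =>
      (hd i).ne'.isUnit
  refine ⟨fun t => (hx t).mulVec_of_mul_eq_mul (nonsing_inv_mul_cancel_right _ _ hD).symm,
    fun t => by rw [hL, mulVec_mulVec], fun hlump t => ?_⟩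
  have hLA : L * A = _ * L := hL ▸ mul_mul_eq_of_mul_conj_eq hD hlump
  exact (hx t).mulVec_of_mul_eq_mul (mul_eq_mul_pinv_mul_of_mul_eq hLrank hLA)

theorem lumping_via_diagonal_conjugation {k n m : ℕ} (hkn : k ≤ n)
    (d : Fin n → ℝ) (hd : ∀ i, 0 < d i)
    (C : Matrix (Fin k) (Fin n) ℝ) (hCrank : C.rank = k)
    (L : Matrix (Fin k) (Fin n) ℝ) (hL : L = C * Matrix.diagonal d)
    (hLrank : L.rank = k)
    (A : Matrix (Fin n) (Fin n) ℝ) (B : Matrix (Fin n) (Fin m) ℝ)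
    (u : ℝ → Fin m → ℝ) (x : ℝ → Fin n → ℝ)
    (hx : ∀ t : ℝ, HasDerivAt x (A.mulVec (x t) + B.mulVec (u t)) t) :
    (∀ t : ℝ, HasDerivAt (fun s => (Matrix.diagonal d).mulVec (x s))
        ((Matrix.diagonal d * A * (Matrix.diagonal d)⁻¹).mulVec
            ((Matrix.diagonal d).mulVec (x t)) +
          (Matrix.diagonal d * B).mulVec (u t)) t) ∧
    (∀ t : ℝ, L.mulVec (x t) = C.mulVec ((Matrix.diagonal d).mulVec (x t))) ∧
    ((C * (Matrix.diagonal d * A * (Matrix.diagonal d)⁻¹) =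
        (C * (Matrix.diagonal d * A * (Matrix.diagonal d)⁻¹) * pinv C) * C) →
      ∀ t : ℝ, HasDerivAt (fun s => L.mulVec (x s))
        ((L * A * pinv L).mulVec (L.mulVec (x t)) + (L * B).mulVec (u t)) t) :=
  lumping_via_diagonal_conjugation_general d hd C L hL hLrank A B u x hx
end
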